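/- Let f ∈ ℤ[X] and d = 2, and let g = f|_{x₀} be the section of f at a vertex x₀ ∈ {0,1}, with coefficients g(X) = b₀ + b₁X + ⋯ + b_tX^t. Then b₂ ≡ 0 (mod 2) and b₃ + b₅ + b₇ + ⋯ ≡ 0 (mod 4). Consequently, every iterated section of f at a non-root vertex of the binary tree satisfies these two conditions. -/
import Mathlib


open Polynomial

/-- The section of `f ∈ ℤ[X]` at a first-level vertex `x₀ ∈ {0, …, d-1}`:
`f|_{x₀}(X) = (f(x₀) div d) + ∑_{i=1}^{t} (f^{(i)}(x₀)/i!) d^{i-1} X^i`, where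
`f^{(i)}/i!` is the `i`-th Hasse derivative and `div` is the quotient in division
with remainder in `{0, …, d-1}` (Euclidean division). -/
noncomputable def psection (d : ℤ) (f : ℤ[X]) (x₀ : ℤ) : ℤ[X] :=
  C ((f.eval x₀).ediv d) +
    ∑ i ∈ Finset.Icc 1 f.natDegree, C ((Polynomial.hasseDeriv i f).eval x₀ * d ^ (i - 1)) * X ^ i

/-- Iterated section of `f` along a word `w = x₁ … x_n`: `f|_w = (…(f|_{x₁})|_{x₂} …)|_{x_n}`. -/
noncomputable def itSection (d : ℤ) (f : ℤ[X]) (w : List ℤ) : ℤ[X] :=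
  w.foldl (psection d) f

/-- The sum of the odd-indexed coefficients `b₃ + b₅ + b₇ + ⋯` of `g`. -/
noncomputable def oddCoeffSum (g : ℤ[X]) : ℤ :=
  ∑ i ∈ (Finset.range (g.natDegree + 1)).filter (fun i => Odd i ∧ 3 ≤ i), g.coeff i

lemma psection_coeff (f : ℤ[X]) (x₀ : ℤ) (n : ℕ) (hn : 1 ≤ n) :
    (psection 2 f x₀).coeff n =
      if n ∈ Finset.Icc 1 f.natDegree
      then (Polynomial.hasseDeriv n f).eval x₀ * 2 ^ (n - 1) else 0 := by
  unfold psection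
  rw [Polynomial.coeff_add, Polynomial.coeff_C, if_neg (by omega), zero_add,
    Polynomial.finset_sum_coeff]
  simp only [Polynomial.coeff_C_mul, Polynomial.coeff_X_pow, mul_ite, mul_one, mul_zero]
  rw [Finset.sum_ite_eq (Finset.Icc 1 f.natDegree) n
    (fun i => (Polynomial.hasseDeriv i f).eval x₀ * 2 ^ (i - 1))]

lemma psection_key (g : ℤ[X]) (x₀ : ℤ) :
    2 ∣ (psection 2 g x₀).coeff 2 ∧ 4 ∣ oddCoeffSum (psection 2 g x₀) := by
  constructor
  · rw [psection_coeff g x₀ 2 (by norm_num)]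
    split
    · exact Dvd.dvd.mul_left (by norm_num) _
    · exact dvd_zero 2
  · apply Finset.dvd_sum
    intro i hi
    simp only [Finset.mem_filter, Finset.mem_range] at hi
    obtain ⟨hr, hodd, h3⟩ := hi
    rw [psection_coeff g x₀ i (by omega)]
    split
    · refine Dvd.dvd.mul_left ?_ _
      have h4 : (4 : ℤ) = 2 ^ 2 := by norm_num
      rw [h4]
      exact pow_dvd_pow 2 (by omega)
    · exact dvd_zero 4

/-- For `d = 2`, every section `g = f|_{x₀}` of `f ∈ ℤ[X]` at a vertex `x₀ ∈ {0,1}`, with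
coefficients `g = b₀ + b₁ X + ⋯ + b_t X^t`, satisfies `b₂ ≡ 0 (mod 2)` and
`b₃ + b₅ + b₇ + ⋯ ≡ 0 (mod 4)`; consequently every iterated section of `f` at a non-root
vertex of the binary tree satisfies these two conditions. -/
theorem section_coefficient_conditions (f : ℤ[X]) :
    (∀ x₀ : ℤ, x₀ = 0 ∨ x₀ = 1 →
        2 ∣ (psection 2 f x₀).coeff 2 ∧ 4 ∣ oddCoeffSum (psection 2 f x₀)) ∧
    (∀ w : List ℤ, w ≠ [] → (∀ x ∈ w, x = 0 ∨ x = 1) →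
        2 ∣ (itSection 2 f w).coeff 2 ∧ 4 ∣ oddCoeffSum (itSection 2 f w)) := by
  constructor
  · intro x₀ _
    exact psection_key f x₀
  · intro w hw _
    rcases List.eq_nil_or_concat w with rfl | ⟨w', x, rfl⟩
    · exact absurd rfl hw
    · have : itSection 2 f (w'.concat x) = psection 2 (itSection 2 f w') x := by
        simp [itSection, List.concat_eq_append, List.foldl_append]
      rw [this]
      exact psection_key _ x
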